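/- arXiv:1901.01567 — 3 statements merged into one kernel-verified Lean document; each statement's English description precedes it below -/
import Mathlib

section
/- The tridiagonal antisymmetric matrix determinant D_n(λ) = det(B_n + 2λI_n), where B_n is the n×n antisymmetric matrix with entries β_{k,k+1} = √(2k) = -β_{k+1,k} and β_{j,k} = 0 for |j-k| ≠ 1, equals ∑_{m=0}^{⌊n/2⌋} 2^{n-m} (n choose 2m) (2m)!/(2^m m!) λ^{n-2m}. -/
/-!
Expanding the tridiagonal determinant along its last row gives the continuant recurrence
`D (n + 2) = 2λ D (n + 1) + 2 (n + 1) D n`, because the two off-diagonal entries joining the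
last two indices multiply to `-2 (n + 1)`. The closed form satisfies the same recurrence:
writing `(2m)! / (2^m m!) = (2m - 1)‼`, its coefficients are `2^(n-m) C(n, 2m) (2m - 1)‼`, and
`C(n, 2m) (2m - 1)‼` counts the `m`-edge matchings of `K_n`, which obey the recurrence
"the last vertex is unmatched, or matched to one of the other `n + 1`".
-/

namespace Matrix

variable {R : Type*} [CommRing R]

def tridiagonal (a b c : ℕ → R) (n : ℕ) : Matrix (Fin n) (Fin n) R :=
  of fun j k =>
    if (j : ℕ) = k then a j
    else if (k : ℕ) = j + 1 then b j
    else if (j : ℕ) = k + 1 then c k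
    else 0

variable (a b c : ℕ → R)

theorem tridiagonal_apply_eq_zero {n : ℕ} {j k : Fin n} (h₁ : (j : ℕ) ≠ k)
    (h₂ : (k : ℕ) ≠ j + 1) (h₃ : (j : ℕ) ≠ k + 1) : tridiagonal a b c n j k = 0 := by
  simp [tridiagonal, h₁, h₂, h₃]

theorem tridiagonal_submatrix_castSucc (n : ℕ) :
    (tridiagonal a b c (n + 1)).submatrix Fin.castSucc Fin.castSucc = tridiagonal a b c n :=
  rfl

theorem det_tridiagonal_zero : (tridiagonal a b c 0).det = 1 :=
  det_fin_zero

theorem det_tridiagonal_one : (tridiagonal a b c 1).det = a 0 := by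
  simp [tridiagonal]

theorem det_tridiagonal_submatrix_castSucc_succAbove (n : ℕ) :
    ((tridiagonal a b c (n + 2)).submatrix Fin.castSucc
      (Fin.last n).castSucc.succAbove).det = b n * (tridiagonal a b c n).det := by
  rw [det_succ_column _ (Fin.last n), Fintype.sum_eq_single (Fin.last n)]
  · have hminor : ((tridiagonal a b c (n + 2)).submatrix Fin.castSucc
        (Fin.last n).castSucc.succAbove).submatrix (Fin.last n).succAbove
        (Fin.last n).succAbove = tridiagonal a b c n := by
      ext i j
      simp [tridiagonal, Fin.succAbove_castSucc_of_lt _ _ (Fin.castSucc_lt_last j)]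
    rw [hminor]
    simp [tridiagonal, ← two_mul, pow_mul]
  · intro i hi
    have hi' : (i : ℕ) < n := Fin.val_lt_last hi
    rw [submatrix_apply, Fin.succAbove_castSucc_self, tridiagonal_apply_eq_zero, mul_zero,
      zero_mul] <;>
      simp only [Fin.val_castSucc, Fin.val_last, Fin.val_succ] <;> omega

theorem det_tridiagonal_add_two (n : ℕ) :
    (tridiagonal a b c (n + 2)).det =
      a (n + 1) * (tridiagonal a b c (n + 1)).det - b n * c n * (tridiagonal a b c n).det := by
  rw [det_succ_row _ (Fin.last _), Fintype.sum_eq_add (Fin.last (n + 1)) (Fin.last n).castSucc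
    (Fin.castSucc_lt_last _).ne']
  · have hdiag : tridiagonal a b c (n + 2) (Fin.last (n + 1)) (Fin.last (n + 1)) = a (n + 1) := by
      simp [tridiagonal]
    have hsubdiag : tridiagonal a b c (n + 2) (Fin.last (n + 1)) (Fin.last n).castSucc = c n := by
      simp [tridiagonal, show n ≠ n + 2 by omega]
    simp [hdiag, hsubdiag, det_tridiagonal_submatrix_castSucc_succAbove,
      tridiagonal_submatrix_castSucc]
    ring
  · rintro j ⟨hj, hj'⟩
    have hjn : (j : ℕ) < n + 1 := Fin.val_lt_last hj
    have hjn' : (j : ℕ) ≠ n := fun h => hj' (Fin.ext h)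
    rw [tridiagonal_apply_eq_zero, mul_zero, zero_mul] <;>
      simp only [Fin.val_last] <;> omega

end Matrix

namespace Nat

theorem factorial_two_mul_eq (m : ℕ) : (2 * m)! = 2 ^ m * m ! * (2 * m - 1)‼ := by
  cases m with
  | zero => rfl
  | succ m =>
    rw [show 2 * (m + 1) = 2 * m + 1 + 1 by ring, factorial_eq_mul_doubleFactorial,
      show 2 * m + 1 + 1 = 2 * (m + 1) by ring, doubleFactorial_two_mul]
    rfl

end Nat

open Finset Nat

def detCoeff (n m : ℕ) : ℕ := 2 ^ (n - m) * n.choose (2 * m) * (2 * m - 1)‼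

theorem detCoeff_zero_right (n : ℕ) : detCoeff n 0 = 2 ^ n := by
  simp [detCoeff]

theorem detCoeff_eq_zero_of_lt {n m : ℕ} (h : n < 2 * m) : detCoeff n m = 0 := by
  simp [detCoeff, choose_eq_zero_of_lt h]

theorem detCoeff_add_two_succ {n m : ℕ} (h : m ≤ n) :
    detCoeff (n + 2) (m + 1) = 2 * detCoeff (n + 1) (m + 1) + 2 * (n + 1) * detCoeff n m := by
  have hchoose : (n + 1) * n.choose (2 * m) = (n + 1).choose (2 * m + 1) * (2 * m + 1) :=
    add_one_mul_choose_eq n (2 * m)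
  simp only [detCoeff, show n + 2 - (m + 1) = n - m + 1 by omega,
    show n + 1 - (m + 1) = n - m by omega, show 2 * (m + 1) = 2 * m + 1 + 1 by ring,
    show 2 * m + 1 + 1 - 1 = 2 * m + 1 by omega, choose_succ_succ' (n + 1),
    doubleFactorial_add_one (2 * m)]
  zify at hchoose ⊢
  linear_combination -(2 ^ (n - m + 1) * ((2 * m - 1)‼ : ℤ)) * hchoose

section Semiring

variable {R : Type*} [CommSemiring R]

def detFormula (n : ℕ) (x : R) : R :=
  ∑ m ∈ range (n / 2 + 1), (detCoeff n m : R) * x ^ (n - 2 * m)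

theorem detFormula_eq_sum_range {n N : ℕ} (hN : n / 2 < N) (x : R) :
    detFormula n x = ∑ m ∈ range N, (detCoeff n m : R) * x ^ (n - 2 * m) := by
  refine sum_subset (range_subset_range.2 hN) fun m _ hm => ?_
  rw [detCoeff_eq_zero_of_lt (by rw [mem_range, not_lt] at hm; omega), cast_zero, zero_mul]

theorem detFormula_add_two (n : ℕ) (x : R) :
    detFormula (n + 2) x = 2 * x * detFormula (n + 1) x + 2 * (n + 1) * detFormula n x := by
  have hterm : ∀ m ∈ range (n / 2 + 1),
      (detCoeff (n + 2) (m + 1) : R) * x ^ (n + 2 - 2 * (m + 1)) =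
        2 * x * ((detCoeff (n + 1) (m + 1) : R) * x ^ (n + 1 - 2 * (m + 1))) +
          2 * (n + 1) * ((detCoeff n m : R) * x ^ (n - 2 * m)) := by
    intro m hm
    have h2m : 2 * m ≤ n := by rw [mem_range] at hm; omega
    rw [detCoeff_add_two_succ (by omega), show n + 2 - 2 * (m + 1) = n - 2 * m by omega]
    rcases h2m.lt_or_eq with h | h
    · rw [show n - 2 * m = n + 1 - 2 * (m + 1) + 1 by omega]
      push_cast
      ring
    · rw [detCoeff_eq_zero_of_lt (n := n + 1) (by omega)]
      push_cast
      ring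
  rw [detFormula_eq_sum_range (n := n + 2) (N := n / 2 + 2) (by omega),
    detFormula_eq_sum_range (n := n + 1) (N := n / 2 + 2) (by omega),
    sum_range_succ' _ (n / 2 + 1), sum_range_succ' _ (n / 2 + 1), sum_congr rfl hterm,
    sum_add_distrib, detFormula, ← mul_sum, ← mul_sum, detCoeff_zero_right, detCoeff_zero_right]
  push_cast
  ring

end Semiring

theorem det_tridiagonal_eq_detFormula {R : Type*} [CommRing R] (x : R) {b c : ℕ → R}
    (hbc : ∀ j, b j * c j = -(2 * (j + 1))) :
    ∀ n, (Matrix.tridiagonal (fun _ => 2 * x) b c n).det = detFormula n x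
  | 0 => by rw [Matrix.det_tridiagonal_zero]; simp [detFormula, detCoeff]
  | 1 => by rw [Matrix.det_tridiagonal_one]; simp [detFormula, detCoeff]
  | n + 2 => by
    rw [Matrix.det_tridiagonal_add_two, det_tridiagonal_eq_detFormula x hbc n,
      det_tridiagonal_eq_detFormula x hbc (n + 1), detFormula_add_two, hbc]
    ring

theorem cast_detCoeff (n m : ℕ) :
    (detCoeff n m : ℝ) =
      2 ^ (n - m) * (n.choose (2 * m) : ℝ) * (((2 * m)! : ℝ) / (2 ^ m * (m ! : ℝ))) := by
  rw [factorial_two_mul_eq, detCoeff]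
  push_cast
  field_simp

/-- determinant of the tridiagonal antisymmetric matrix `B_n + 2λ I`. -/
theorem stmt0 (n : ℕ) (B : Matrix (Fin n) (Fin n) ℝ)
    (hB : ∀ j k : Fin n, B j k =
      if (k : ℕ) = (j : ℕ) + 1 then Real.sqrt (2 * ((j : ℕ) + 1))
      else if (j : ℕ) = (k : ℕ) + 1 then -Real.sqrt (2 * ((k : ℕ) + 1))
      else 0)
    (lam : ℝ) :
    (B + (2 * lam) • (1 : Matrix (Fin n) (Fin n) ℝ)).det =
      ∑ m ∈ Finset.range (n / 2 + 1),
        2 ^ (n - m) * (n.choose (2 * m) : ℝ) *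
          (((2 * m).factorial : ℝ) / (2 ^ m * (m.factorial : ℝ))) * lam ^ (n - 2 * m) := by
  have hmat : B + (2 * lam) • (1 : Matrix (Fin n) (Fin n) ℝ) =
      Matrix.tridiagonal (fun _ => 2 * lam) (fun j => √(2 * (j + 1)))
        (fun j => -√(2 * (j + 1))) n := by
    ext j k
    rw [Matrix.add_apply, hB, Matrix.smul_apply, Matrix.one_apply, Matrix.tridiagonal,
      Matrix.of_apply]
    simp only [Fin.ext_iff]
    split_ifs <;> first | omega | simp
  have hbc (j : ℕ) : √(2 * (j + 1)) * -√(2 * (j + 1)) = -(2 * ((j : ℝ) + 1)) := by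
    rw [mul_neg, Real.mul_self_sqrt (by positivity)]
  rw [hmat, det_tridiagonal_eq_detFormula lam hbc, detFormula]
  simp_rw [cast_detCoeff]
end

section
/- Define the skew-symmetric pairing ⟨f|g⟩₁ = ∫∫_{ℝ²} g(x) f(y) sgn(x-y) dx dy on Schwartz functions. For the oscillator wave functions φ_j, one has ⟨φ_j'|φ_k⟩₁ = 2δ_{jk}. -/
/-!
With `U y = ∫_{-∞}^y φ_k`, the inner integral is `∫ φ_k - 2 U y`. As `∫ φ_j' = 0`, the pairing
is `-2 ∫ U φ_j'`, and integration by parts (`U` is bounded with `U' = φ_k`) turns it into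
`2 ∫ φ_k φ_j`. Orthonormality follows from the Gaussian integration by parts
`∫ H_j' H_k e^{-x²} = ∫ H_j H_{k+1} e^{-x²}`, using `H_j' = 2j H_{j-1}` and
`H_{k+1} = 2x H_k - H_k'`.
-/

open MeasureTheory

/-- Physicists' Hermite polynomials. -/
noncomputable def hermiteP : ℕ → ℝ → ℝ
  | 0 => fun _ => 1
  | 1 => fun x => 2 * x
  | (n + 2) => fun x => 2 * x * hermiteP (n + 1) x - 2 * ((n : ℝ) + 1) * hermiteP n x

/-- The oscillator wave functions `φ_j(x) = (2^j j! √π)^{-1/2} e^{-x²/2} H_j(x)`. -/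
noncomputable def phi (j : ℕ) (x : ℝ) : ℝ :=
  (Real.sqrt (2 ^ j * (j.factorial : ℝ) * Real.sqrt Real.pi))⁻¹ *
    Real.exp (-x ^ 2 / 2) * hermiteP j x

open Real Filter Asymptotics Topology Polynomial Set

section PolynomialGaussian

variable (p : ℝ[X]) {b : ℝ}

theorem tendsto_eval_mul_exp_neg_mul_sq_atTop (hb : 0 < b) :
    Tendsto (fun x => p.eval x * exp (-b * x ^ 2)) atTop (𝓝 0) := by
  have hp : (fun x => p.eval x) =O[atTop] fun x => x ^ p.natDegree := by
    simpa using isBigO_atTop_of_degree_le p (X ^ p.natDegree) (by simp [degree_le_natDegree])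
  have hmon : (fun x : ℝ => x ^ p.natDegree * exp (-b * x ^ 2)) =o[atTop]
      fun x => exp (-(1 / 2) * x) := by
    refine (rpow_mul_exp_neg_mul_sq_isLittleO_exp_neg hb p.natDegree).congr' ?_ .rfl
    filter_upwards [eventually_gt_atTop 0] with x hx
    rw [rpow_natCast]
  refine ((hp.mul (isBigO_refl _ _)).trans hmon.isBigO).trans_tendsto ?_
  exact tendsto_exp_atBot.comp (tendsto_id.const_mul_atTop_of_neg (by norm_num))

theorem tendsto_eval_mul_exp_neg_mul_sq_cocompact (hb : 0 < b) :
    Tendsto (fun x => p.eval x * exp (-b * x ^ 2)) (cocompact ℝ) (𝓝 0) := by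
  rw [cocompact_eq_atBot_atTop, tendsto_sup]
  refine ⟨?_, tendsto_eval_mul_exp_neg_mul_sq_atTop p hb⟩
  refine ((tendsto_eval_mul_exp_neg_mul_sq_atTop (p.comp (-X)) hb).comp
    tendsto_neg_atBot_atTop).congr fun x => ?_
  simp

theorem integrable_eval_mul_exp_neg_mul_sq (hb : 0 < b) :
    Integrable fun x => p.eval x * exp (-b * x ^ 2) := by
  have hb2 : 0 < b / 2 := half_pos hb
  refine (Continuous.locallyIntegrable (by fun_prop)).integrable_of_isBigO_cocompact
    (g := fun x => exp (-(b / 2) * x ^ 2)) ?_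
    ((integrable_exp_neg_mul_sq hb2).integrableAtFilter _)
  refine (isLittleO_of_tendsto (fun x hx => absurd hx (exp_ne_zero _)) ?_).isBigO
  refine (tendsto_eval_mul_exp_neg_mul_sq_cocompact p hb2).congr fun x => ?_
  rw [eq_div_iff (exp_ne_zero _), mul_assoc, ← exp_add]
  ring_nf

theorem hasDerivAt_eval_mul_exp_neg_mul_sq (b x : ℝ) :
    HasDerivAt (fun x => p.eval x * exp (-b * x ^ 2))
      ((derivative p - C (2 * b) * X * p).eval x * exp (-b * x ^ 2)) x := by
  have hexp : HasDerivAt (fun x => exp (-b * x ^ 2)) (exp (-b * x ^ 2) * (-b * (2 * x))) x := by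
    simpa using ((hasDerivAt_pow 2 x).const_mul (-b)).exp
  refine ((p.hasDerivAt x).mul hexp).congr_deriv ?_
  simp only [eval_sub, eval_mul, eval_C, eval_X]
  ring

theorem integral_eval_derivative_mul_eval_mul_exp (hb : 0 < b) (q : ℝ[X]) :
    ∫ x, (derivative p).eval x * q.eval x * exp (-b * x ^ 2) =
      ∫ x, p.eval x * (C (2 * b) * X * q - derivative q).eval x * exp (-b * x ^ 2) := by
  have hzero := integral_eq_zero_of_hasDerivAt_of_integrable
    (hasDerivAt_eval_mul_exp_neg_mul_sq (p * q) b)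
    (integrable_eval_mul_exp_neg_mul_sq _ hb) (integrable_eval_mul_exp_neg_mul_sq _ hb)
  have hsplit : derivative (p * q) - C (2 * b) * X * (p * q) =
      derivative p * q - p * (C (2 * b) * X * q - derivative q) := by
    rw [derivative_mul]; ring
  simp only [hsplit, eval_sub, sub_mul] at hzero
  rw [integral_sub (integrable_eval_mul_exp_neg_mul_sq _ hb)
    (integrable_eval_mul_exp_neg_mul_sq _ hb), sub_eq_zero] at hzero
  simpa only [eval_mul] using hzero

end PolynomialGaussian

noncomputable def hermitePoly : ℕ → ℝ[X]
  | 0 => 1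
  | 1 => C 2 * X
  | (n + 2) => C 2 * X * hermitePoly (n + 1) - C (2 * ((n : ℝ) + 1)) * hermitePoly n

theorem eval_hermitePoly (n : ℕ) (x : ℝ) : (hermitePoly n).eval x = hermiteP n x := by
  induction n using Nat.twoStepInduction with
  | zero => simp [hermitePoly, hermiteP]
  | one => simp [hermitePoly, hermiteP]
  | more n ih₁ ih₂ => simp [hermitePoly, hermiteP, ih₁, ih₂]

theorem hermitePoly_succ (n : ℕ) :
    hermitePoly (n + 1) = C 2 * X * hermitePoly n - C (2 * (n : ℝ)) * hermitePoly (n - 1) := by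
  cases n with
  | zero => simp [hermitePoly]
  | succ n => simp [hermitePoly]

theorem derivative_hermitePoly (n : ℕ) :
    derivative (hermitePoly n) = C (2 * (n : ℝ)) * hermitePoly (n - 1) := by
  induction n using Nat.twoStepInduction with
  | zero => simp [hermitePoly]
  | one => simp [hermitePoly]
  | more n ih₁ ih₂ =>
    rw [hermitePoly.eq_3]
    simp only [derivative_sub, derivative_mul, derivative_C, derivative_X, ih₁, ih₂,
      Nat.add_sub_cancel, show n + 2 - 1 = n + 1 from rfl]
    rw [hermitePoly_succ n]
    push_cast
    simp only [C_mul, C_add, C_1, C_ofNat]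
    ring

theorem hermitePoly_succ_eq_sub_derivative (n : ℕ) :
    hermitePoly (n + 1) = C 2 * X * hermitePoly n - derivative (hermitePoly n) := by
  rw [hermitePoly_succ, derivative_hermitePoly]

noncomputable def hermiteNormSq (n : ℕ) : ℝ := 2 ^ n * n.factorial * √π

theorem hermiteNormSq_pos (n : ℕ) : 0 < hermiteNormSq n := by
  unfold hermiteNormSq; positivity

theorem integral_hermitePoly_mul_hermitePoly_succ (j k : ℕ) :
    ∫ x, (hermitePoly j).eval x * (hermitePoly (k + 1)).eval x * exp (-1 * x ^ 2) =
      2 * j * ∫ x, (hermitePoly (j - 1)).eval x * (hermitePoly k).eval x * exp (-1 * x ^ 2) := by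
  have hibp := integral_eval_derivative_mul_eval_mul_exp (hermitePoly j) one_pos (hermitePoly k)
  rw [mul_one, ← hermitePoly_succ_eq_sub_derivative, derivative_hermitePoly] at hibp
  rw [← hibp, ← integral_const_mul]
  simp only [eval_mul, eval_C, mul_assoc]

theorem integral_hermitePoly_mul_hermitePoly (j k : ℕ) :
    ∫ x, (hermitePoly j).eval x * (hermitePoly k).eval x * exp (-1 * x ^ 2) =
      if j = k then hermiteNormSq j else 0 := by
  induction k generalizing j with
  | zero =>
    cases j with
    | zero => simpa [hermitePoly, hermiteNormSq] using integral_gaussian 1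
    | succ j =>
      simp_rw [mul_comm ((hermitePoly (j + 1)).eval _)]
      rw [integral_hermitePoly_mul_hermitePoly_succ]
      simp
  | succ k ih =>
    rw [integral_hermitePoly_mul_hermitePoly_succ]
    cases j with
    | zero => simp
    | succ j =>
      simp only [Nat.add_sub_cancel, ih, Nat.add_right_cancel_iff]
      split_ifs with h
      · subst h; simp only [hermiteNormSq, Nat.factorial_succ]; push_cast; ring
      · simp

theorem mul_sign_sub_eq_indicator_sub_indicator (f : ℝ → ℝ) (x y : ℝ) :
    f x * sign (x - y) = (Ioi y).indicator f x - (Iio y).indicator f x := by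
  rcases lt_trichotomy x y with h | rfl | h
  · simp [h, h.not_gt, sign_of_neg (sub_neg.mpr h)]
  · simp
  · simp [h, h.not_gt, sign_of_pos (sub_pos.mpr h)]

section SignPairing

variable {f : ℝ → ℝ}

theorem integral_mul_sign_sub (hf : Integrable f) (y : ℝ) :
    ∫ x, f x * sign (x - y) = (∫ x, f x) - 2 * ∫ x in Iic y, f x := by
  have hsplit := intervalIntegral.integral_Iic_add_Ioi hf.integrableOn hf.integrableOn (b := y)
  simp_rw [mul_sign_sub_eq_indicator_sub_indicator f _ y]
  rw [integral_sub (hf.indicator measurableSet_Ioi) (hf.indicator measurableSet_Iio),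
    integral_indicator measurableSet_Ioi, integral_indicator measurableSet_Iio,
    ← integral_Iic_eq_integral_Iio]
  linarith

theorem hasDerivAt_integral_Iic (hf : Continuous f) (hfi : Integrable f) (y : ℝ) :
    HasDerivAt (fun y => ∫ x in Iic y, f x) (f y) y := by
  have hshift : (fun y => ∫ x in Iic y, f x) =
      fun y => (∫ x in Iic 0, f x) + ∫ x in (0 : ℝ)..y, f x := by
    funext y
    linarith [intervalIntegral.integral_Iic_sub_Iic hfi.integrableOn hfi.integrableOn
      (a := 0) (b := y)]
  rw [hshift]
  exact (intervalIntegral.integral_hasDerivAt_right hfi.intervalIntegrable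
    (hf.stronglyMeasurableAtFilter _ _) hf.continuousAt).const_add _

theorem norm_integral_Iic_le (hf : Integrable f) (y : ℝ) :
    ‖∫ x in Iic y, f x‖ ≤ ∫ x, ‖f x‖ :=
  (norm_integral_le_integral_norm _).trans
    (setIntegral_le_integral hf.norm (.of_forall fun _ => norm_nonneg _))

theorem integral_integral_mul_mul_sign_sub {g g' : ℝ → ℝ} (hf : Continuous f)
    (hfi : Integrable f) (hg : ∀ x, HasDerivAt g (g' x) x) (hgi : Integrable g)
    (hg'i : Integrable g') (hfg : Integrable fun x => f x * g x) :
    ∫ y, ∫ x, f x * g' y * sign (x - y) = 2 * ∫ x, f x * g x := by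
  set U : ℝ → ℝ := fun y => ∫ x in Iic y, f x
  have hU : Continuous U :=
    continuous_iff_continuousAt.mpr fun y => (hasDerivAt_integral_Iic hf hfi y).continuousAt
  have hUg' : Integrable fun y => U y * g' y :=
    hg'i.bdd_mul hU.aestronglyMeasurable (.of_forall (norm_integral_Iic_le hfi))
  have hUg : Integrable fun y => U y * g y :=
    hgi.bdd_mul hU.aestronglyMeasurable (.of_forall (norm_integral_Iic_le hfi))
  -- `U` is bounded, so `U g` is integrable and the boundary terms vanish
  have hparts : ∫ y, U y * g' y = -∫ y, f y * g y :=
    integral_mul_deriv_eq_deriv_mul_of_integrable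
      (fun y _ => hasDerivAt_integral_Iic hf hfi y) (fun y _ => hg y) hUg' hfg hUg
  calc ∫ y, ∫ x, f x * g' y * sign (x - y)
      = ∫ y, ((∫ x, f x) * g' y - 2 * (U y * g' y)) := by
        congr 1; funext y
        simp_rw [mul_right_comm _ (g' y), integral_mul_const, integral_mul_sign_sub hfi, U]
        ring
    _ = (∫ x, f x) * (∫ y, g' y) - 2 * ∫ y, U y * g' y := by
        rw [integral_sub (hg'i.const_mul _) (hUg'.const_mul _), integral_const_mul,
          integral_const_mul]
    _ = 2 * ∫ x, f x * g x := by
        rw [integral_eq_zero_of_hasDerivAt_of_integrable hg hg'i hgi, hparts]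
        ring

end SignPairing

theorem phi_eq (j : ℕ) :
    phi j = fun x =>
      (C (√(hermiteNormSq j))⁻¹ * hermitePoly j).eval x * exp (-(1 / 2) * x ^ 2) := by
  funext x
  simp only [phi, hermiteNormSq, eval_mul, eval_C, eval_hermitePoly]
  ring_nf

theorem continuous_phi (j : ℕ) : Continuous (phi j) := by
  rw [phi_eq]; fun_prop

theorem integrable_phi (j : ℕ) : Integrable (phi j) := by
  rw [phi_eq]; exact integrable_eval_mul_exp_neg_mul_sq _ (by norm_num)

theorem hasDerivAt_phi (j : ℕ) (x : ℝ) : HasDerivAt (phi j) (deriv (phi j) x) x := by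
  rw [phi_eq]; exact (hasDerivAt_eval_mul_exp_neg_mul_sq _ _ x).differentiableAt.hasDerivAt

theorem integrable_deriv_phi (j : ℕ) : Integrable (deriv (phi j)) := by
  have hderiv := fun x => (hasDerivAt_eval_mul_exp_neg_mul_sq
    (C (√(hermiteNormSq j))⁻¹ * hermitePoly j) (1 / 2) x).deriv
  rw [phi_eq, funext hderiv]
  exact integrable_eval_mul_exp_neg_mul_sq _ (by norm_num)

theorem phi_mul_phi (j k : ℕ) (x : ℝ) :
    phi j x * phi k x = (√(hermiteNormSq j))⁻¹ * (√(hermiteNormSq k))⁻¹ *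
      ((hermitePoly j).eval x * (hermitePoly k).eval x * exp (-1 * x ^ 2)) := by
  simp only [phi_eq, eval_mul, eval_C]
  rw [show -1 * x ^ 2 = -(1 / 2) * x ^ 2 + -(1 / 2) * x ^ 2 by ring, exp_add]
  ring

theorem integrable_phi_mul_phi (j k : ℕ) : Integrable fun x => phi j x * phi k x := by
  simp_rw [phi_mul_phi]
  refine Integrable.const_mul ?_ _
  simpa only [eval_mul] using
    integrable_eval_mul_exp_neg_mul_sq (hermitePoly j * hermitePoly k) one_pos

theorem integral_phi_mul_phi (j k : ℕ) :
    ∫ x, phi j x * phi k x = if j = k then 1 else 0 := by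
  simp_rw [phi_mul_phi, integral_const_mul, integral_hermitePoly_mul_hermitePoly]
  split_ifs with h
  · subst h
    rw [← mul_inv, mul_self_sqrt (hermiteNormSq_pos j).le,
      inv_mul_cancel₀ (hermiteNormSq_pos j).ne']
  · simp

/-- with the skew-symmetric pairing
`⟨f|g⟩₁ = ∫∫ g(x) f(y) sgn(x-y) dx dy`, one has `⟨φ_j'|φ_k⟩₁ = 2 δ_{jk}`. -/
theorem stmt5 (j k : ℕ) :
    (∫ y : ℝ, ∫ x : ℝ, phi k x * deriv (phi j) y * Real.sign (x - y)) =
      if j = k then 2 else 0 := by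
  rw [integral_integral_mul_mul_sign_sub (continuous_phi k) (integrable_phi k) (hasDerivAt_phi j)
    (integrable_phi j) (integrable_deriv_phi j) (integrable_phi_mul_phi k j),
    integral_phi_mul_phi]
  by_cases h : j = k
  · simp [h]
  · simp [h, Ne.symm h]
end

section
/- Under the same hypotheses (m < n, F(x) = e^{-x²/2}∏_{j=1}^m(x-λ_j), 2nc² ∈ (0,1)), for any interval A ⊂ (0,c), setting A₁ = A ∪ (-A) and φ(A) = ∫_A u du: (1 - nc²)·2φ(A) ∫_ℝ |F|² ≤ ∫_ℝ dx₁ ∫_{x₁+A₁} dx₂ |x₁ - x₂| |F(x₁)||F(x₂)| ≤ 2φ(A) ∫_ℝ |F|². -/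
/-
Write `B = ∫ F²` and `L(t) = ∫ |F(x)| |F(x+t)| dx`. Substituting `x₂ = x₁ + u` and applying Fubini,
the middle term is `∫_{A₁} |u| L(u) du`, and `∫_{A₁} |u| = 2φ(A)`, so it suffices that
`(1 - nc²) B ≤ L(u) ≤ B` for `|u| ≤ c`. The upper bound is AM-GM. For the lower bound,
`L(t) ≥ ∫ F(x) F(x+t) = B - ½ ∫ (F(x+t) - F(x))² ≥ B - (t²/2) ∫ F'²` by Cauchy-Schwarz on
`F(x+t) - F(x) = ∫₀ᵗ F'(x+u) du`. Finally, for `F = e^{-x²/2} P` with `deg P ≤ m`, integration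
by parts gives `∫ F'² ≤ ∫ F'² + ∫ x² F² = ∫ e^{-x²} (P'² + P²) ≤ (2m+1) B`, the last step being
the spectral bound `2m` for the Hermite operator `-d²/dx² + 2x d/dx` on polynomials of degree `≤ m`.
-/

open MeasureTheory Polynomial Real Set

namespace Polynomial

theorem integrable_exp_neg_mul_sq_mul_eval {b : ℝ} (hb : 0 < b) (p : ℝ[X]) :
    Integrable fun x : ℝ => exp (-b * x ^ 2) * p.eval x := by
  induction p using Polynomial.induction_on' with
  | add p q hp hq => simp only [eval_add, mul_add]; exact hp.add hq
  | monomial n a =>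
    have h := (integrable_rpow_mul_exp_neg_mul_sq hb (s := n)
      (neg_one_lt_zero.trans_le n.cast_nonneg)).const_mul a
    simp only [rpow_natCast] at h
    simpa only [eval_monomial, mul_comm, mul_left_comm, mul_assoc] using h

noncomputable def gaussIntegral : ℝ[X] →ₗ[ℝ] ℝ where
  toFun p := ∫ x : ℝ, exp (-x ^ 2) * p.eval x
  map_add' p q := by
    simp only [eval_add, mul_add]
    exact integral_add (by simpa using integrable_exp_neg_mul_sq_mul_eval one_pos p)
      (by simpa using integrable_exp_neg_mul_sq_mul_eval one_pos q)
  map_smul' a p := by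
    simp only [eval_smul, smul_eq_mul, RingHom.id_apply, ← integral_const_mul]
    congr 1 with x; ring

theorem gaussIntegral_apply (p : ℝ[X]) :
    gaussIntegral p = ∫ x : ℝ, exp (-x ^ 2) * p.eval x := rfl

theorem gaussIntegral_C_mul (a : ℝ) (p : ℝ[X]) :
    gaussIntegral (C a * p) = a * gaussIntegral p := by
  rw [← smul_eq_C_mul, map_smul, smul_eq_mul]

theorem gaussIntegral_sq_nonneg (p : ℝ[X]) : 0 ≤ gaussIntegral (p ^ 2) :=
  integral_nonneg fun x => by simp only [eval_pow]; positivity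

theorem gaussIntegral_two_mul_X_mul_sub_derivative (q : ℝ[X]) :
    gaussIntegral (2 * X * q - derivative q) = 0 := by
  have hderiv (x : ℝ) : HasDerivAt (fun x => exp (-x ^ 2) * q.eval x)
      (exp (-x ^ 2) * (derivative q - 2 * X * q).eval x) x := by
    have hsq : HasDerivAt (fun x : ℝ => -x ^ 2) (-(2 * x)) x := by
      simpa using ((hasDerivAt_pow 2 x).const_mul (-1 : ℝ))
    refine (hsq.exp.mul (q.hasDerivAt x)).congr_deriv ?_
    simp only [eval_sub, eval_mul, eval_X, eval_ofNat]
    ring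
  have hzero := integral_eq_zero_of_hasDerivAt_of_integrable hderiv
    (by simpa only [neg_mul, one_mul] using
      integrable_exp_neg_mul_sq_mul_eval one_pos (derivative q - 2 * X * q))
    (by simpa only [neg_mul, one_mul] using integrable_exp_neg_mul_sq_mul_eval one_pos q)
  rw [← neg_sub, map_neg, gaussIntegral_apply, hzero, neg_zero]

noncomputable def hermiteOperator (p : ℝ[X]) : ℝ[X] :=
  2 * X * derivative p - derivative (derivative p)

theorem gaussIntegral_mul_hermiteOperator (p q : ℝ[X]) :
    gaussIntegral (p * hermiteOperator q) = gaussIntegral (derivative p * derivative q) := by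
  have h := gaussIntegral_two_mul_X_mul_sub_derivative (p * derivative q)
  rw [← sub_eq_zero, ← map_sub, ← h]
  congr 1
  simp only [hermiteOperator, derivative_mul]
  ring

theorem derivative_hermiteOperator (p : ℝ[X]) :
    derivative (hermiteOperator p) = hermiteOperator (derivative p) + 2 * derivative p := by
  simp only [hermiteOperator, derivative_sub, derivative_mul, derivative_X, derivative_ofNat]
  ring

theorem gaussIntegral_derivative_sq_le {p : ℝ[X]} {m : ℕ} (hp : p.natDegree ≤ m) :
    gaussIntegral (derivative p ^ 2) ≤ 2 * m * gaussIntegral (p ^ 2) := by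
  induction m generalizing p with
  | zero =>
    rw [derivative_of_natDegree_zero (Nat.le_zero.1 hp)]
    simp
  | succ m ih =>
    have hp' : (derivative p).natDegree ≤ m := (natDegree_derivative_le p).trans (by omega)
    -- In `L²(e^{-x²})`, with `L = hermiteOperator`: `⟪p, L p⟫ = ‖p'‖²` and, by induction,
    -- `‖L p‖² = ‖p''‖² + 2‖p'‖² ≤ 2(m+1)‖p'‖²`; now expand `0 ≤ ‖L p - 2(m+1) p‖²`.
    have hLL : gaussIntegral (hermiteOperator p ^ 2) =
        gaussIntegral (derivative (derivative p) ^ 2) + 2 * gaussIntegral (derivative p ^ 2) := by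
      rw [sq, gaussIntegral_mul_hermiteOperator, derivative_hermiteOperator, add_mul, map_add,
        mul_comm, gaussIntegral_mul_hermiteOperator, mul_assoc, ← sq, ← sq]
      simpa only [map_ofNat] using congrArg (_ + ·) (gaussIntegral_C_mul 2 (derivative p ^ 2))
    have hpL : gaussIntegral (p * hermiteOperator p) = gaussIntegral (derivative p ^ 2) := by
      rw [gaussIntegral_mul_hermiteOperator, sq]
    have hsq := gaussIntegral_sq_nonneg (hermiteOperator p - C (2 * (m + 1) : ℝ) * p)
    have hexp : (hermiteOperator p - C (2 * (m + 1) : ℝ) * p) ^ 2 = hermiteOperator p ^ 2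
        - C (4 * (m + 1) : ℝ) * (p * hermiteOperator p) + C ((2 * (m + 1)) ^ 2 : ℝ) * p ^ 2 := by
      simp only [C_mul, C_pow, C_add, C_1, map_natCast, map_ofNat]; ring
    rw [hexp, map_add, map_sub, gaussIntegral_C_mul, gaussIntegral_C_mul, hLL, hpL] at hsq
    push_cast
    nlinarith [ih hp', gaussIntegral_sq_nonneg p]

theorem gaussIntegral_sq_derivative_sub_X_mul_le {p : ℝ[X]} {m : ℕ} (hp : p.natDegree ≤ m) :
    gaussIntegral ((derivative p - X * p) ^ 2) ≤ (2 * m + 1) * gaussIntegral (p ^ 2) := by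
  have hibp := gaussIntegral_two_mul_X_mul_sub_derivative (X * p ^ 2)
  have hsplit : (derivative p - X * p) ^ 2 = derivative p ^ 2 + p ^ 2 - (X * p) ^ 2
      + (2 * X * (X * p ^ 2) - derivative (X * p ^ 2)) := by
    simp only [derivative_mul, derivative_X, derivative_sq, map_ofNat]
    ring
  rw [hsplit, map_add, hibp, add_zero, map_sub, map_add]
  linarith [gaussIntegral_derivative_sq_le hp, gaussIntegral_sq_nonneg (X * p)]

end Polynomial

section

variable {α β : Type*} [MeasurableSpace α] [MeasurableSpace β]

theorem sq_setIntegral_le {μ : Measure α} {h : α → ℝ} {s : Set α} (hs : μ s ≠ ⊤)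
    (hh : IntegrableOn h s μ) (hh2 : IntegrableOn (fun u => h u ^ 2) s μ) :
    (∫ u in s, h u ∂μ) ^ 2 ≤ μ.real s * ∫ u in s, h u ^ 2 ∂μ := by
  rcases eq_or_ne (μ s) 0 with h0 | h0
  · simp [Measure.restrict_eq_zero.2 h0]
  have hpos : 0 < μ.real s := ENNReal.toReal_pos h0 hs
  have hJensen := (Even.convexOn_pow (𝕜 := ℝ) even_two).map_set_average_le
    (continuous_pow 2).continuousOn isClosed_univ h0 hs (by simp) hh hh2
  simp only [setAverage_eq, smul_eq_mul, mul_pow] at hJensen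
  rwa [sq (μ.real s)⁻¹, mul_assoc, mul_le_mul_iff_right₀ (inv_pos.2 hpos),
    inv_mul_le_iff₀ hpos] at hJensen

theorem integrable_prod_of_integral_norm_le {E : Type*} [NormedAddCommGroup E] [NormedSpace ℝ E]
    {μ : Measure α} {ν : Measure β} [SFinite μ] [IsFiniteMeasure ν] {K : α × β → E}
    (hK : AEStronglyMeasurable K (μ.prod ν)) (hint : ∀ᵐ y ∂ν, Integrable (fun x => K (x, y)) μ)
    {C : ℝ} (hC : ∀ᵐ y ∂ν, ∫ x, ‖K (x, y)‖ ∂μ ≤ C) : Integrable K (μ.prod ν) :=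
  (integrable_prod_iff' hK).2 ⟨hint,
    (integrable_const C).mono' hK.norm.prod_swap.integral_prod_right' (hC.mono fun _ hy =>
      (Real.norm_of_nonneg (integral_nonneg fun _ => norm_nonneg _)).trans_le hy)⟩

end

section Translation

variable {f f' : ℝ → ℝ}

theorem integrable_mul_comp_add (hf : Continuous f) (hf2 : Integrable fun x => f x ^ 2) (t : ℝ) :
    Integrable fun x => f x * f (x + t) :=
  ((hf2.add (hf2.comp_add_right t)).div_const 2).mono'
    (hf.mul (hf.comp (continuous_add_const t))).aestronglyMeasurable
    (ae_of_all _ fun x => by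
      simp only [Pi.add_apply]
      rw [Real.norm_eq_abs, abs_mul]
      nlinarith [sq_nonneg (|f x| - |f (x + t)|), sq_abs (f x), sq_abs (f (x + t))])

theorem integral_abs_mul_comp_add_le (hf2 : Integrable fun x => f x ^ 2) (t : ℝ) :
    ∫ x, |f x| * |f (x + t)| ≤ ∫ x, f x ^ 2 := by
  calc ∫ x, |f x| * |f (x + t)|
      ≤ ∫ x, (f x ^ 2 + f (x + t) ^ 2) / 2 :=
        integral_mono_of_nonneg (ae_of_all _ fun x => by positivity)
          ((hf2.add (hf2.comp_add_right t)).div_const 2)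
          (ae_of_all _ fun x => by
            nlinarith [sq_nonneg (|f x| - |f (x + t)|), sq_abs (f x), sq_abs (f (x + t))])
    _ = ∫ x, f x ^ 2 := by
        rw [integral_div, integral_add hf2 (hf2.comp_add_right t),
          integral_add_right_eq_self (fun x => f x ^ 2) t]
        ring

theorem sq_comp_add_sub_le (hderiv : ∀ x, HasDerivAt f (f' x) x) (hf' : Continuous f')
    {t : ℝ} (ht : 0 ≤ t) (x : ℝ) :
    (f (x + t) - f x) ^ 2 ≤ t * ∫ u in Ioc 0 t, f' (x + u) ^ 2 := by
  have hftc : f (x + t) - f x = ∫ u in Ioc 0 t, f' (x + u) := by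
    rw [← intervalIntegral.integral_of_le ht, intervalIntegral.integral_comp_add_left, add_zero,
      intervalIntegral.integral_eq_sub_of_hasDerivAt (fun u _ => hderiv u)
        (hf'.intervalIntegrable _ _)]
  have hcs := sq_setIntegral_le (μ := volume) (s := Ioc 0 t) measure_Ioc_lt_top.ne
    (by fun_prop : Continuous fun u => f' (x + u)).integrableOn_Ioc
    (by fun_prop : Continuous fun u => f' (x + u) ^ 2).integrableOn_Ioc
  rwa [Measure.real, Real.volume_Ioc, sub_zero, ENNReal.toReal_ofReal ht, ← hftc] at hcs

theorem integral_sq_comp_add_sub_le (hderiv : ∀ x, HasDerivAt f (f' x) x) (hf' : Continuous f')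
    (hf'2 : Integrable fun x => f' x ^ 2) (t : ℝ) :
    ∫ x, (f (x + t) - f x) ^ 2 ≤ t ^ 2 * ∫ x, f' x ^ 2 := by
  wlog ht : 0 ≤ t generalizing t
  · have hreflect : ∫ x, (f (x + t) - f x) ^ 2 = ∫ x, (f (x + -t) - f x) ^ 2 := by
      rw [← integral_add_right_eq_self (fun x => (f (x + t) - f x) ^ 2) (-t)]
      congr 1 with x
      rw [neg_add_cancel_right]; ring
    rw [hreflect, ← neg_sq]
    exact this (-t) (by linarith)
  have : IsFiniteMeasure (volume.restrict (Ioc 0 t)) :=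
    isFiniteMeasure_restrict.2 measure_Ioc_lt_top.ne
  have hK : Integrable (fun z : ℝ × ℝ => f' (z.1 + z.2) ^ 2)
      (volume.prod (volume.restrict (Ioc 0 t))) :=
    integrable_prod_of_integral_norm_le
      ((hf'.comp continuous_add).pow 2).aestronglyMeasurable
      (ae_of_all _ fun u => hf'2.comp_add_right u) (C := ∫ x, f' x ^ 2)
      (ae_of_all _ fun u => by
        simp only [norm_pow, Real.norm_eq_abs, sq_abs]
        exact (integral_add_right_eq_self (μ := volume) (fun x => f' x ^ 2) u).le)
  calc ∫ x, (f (x + t) - f x) ^ 2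
      ≤ ∫ x, t * ∫ u in Ioc 0 t, f' (x + u) ^ 2 :=
        integral_mono_of_nonneg (ae_of_all _ fun x => sq_nonneg _)
          (hK.integral_prod_left.const_mul t) (ae_of_all _ (sq_comp_add_sub_le hderiv hf' ht))
    _ = t * ∫ u in Ioc 0 t, ∫ x, f' (x + u) ^ 2 := by
        rw [integral_const_mul, integral_integral_swap hK]
    _ = t ^ 2 * ∫ x, f' x ^ 2 := by
        simp only [integral_add_right_eq_self (fun x => f' x ^ 2), setIntegral_const,
          Measure.real, Real.volume_Ioc, sub_zero, ENNReal.toReal_ofReal ht, smul_eq_mul]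
        ring

theorem integral_sq_sub_le_integral_abs_mul_comp_add (hderiv : ∀ x, HasDerivAt f (f' x) x)
    (hf2 : Integrable fun x => f x ^ 2) (hf' : Continuous f')
    (hf'2 : Integrable fun x => f' x ^ 2) (t : ℝ) :
    (∫ x, f x ^ 2) - t ^ 2 / 2 * ∫ x, f' x ^ 2 ≤ ∫ x, |f x| * |f (x + t)| := by
  have hf : Continuous f := continuous_iff_continuousAt.2 fun x => (hderiv x).continuousAt
  have hprod := integrable_mul_comp_add hf hf2 t
  have hshift := hf2.comp_add_right t
  have hdiff : Integrable fun x => (f (x + t) - f x) ^ 2 := by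
    have := (hshift.add hf2).sub (hprod.const_mul 2)
    refine this.congr (ae_of_all _ fun x => ?_)
    simp only [Pi.add_apply, Pi.sub_apply]; ring
  have hsum : Integrable fun x => f x ^ 2 + f (x + t) ^ 2 := hf2.add hshift
  have hpolar : ∫ x, f x * f (x + t) = (∫ x, f x ^ 2) - (∫ x, (f (x + t) - f x) ^ 2) / 2 := by
    calc ∫ x, f x * f (x + t)
        = ∫ x, ((f x ^ 2 + f (x + t) ^ 2) - (f (x + t) - f x) ^ 2) / 2 :=
          integral_congr_ae (ae_of_all _ fun x => by ring)
      _ = (∫ x, f x ^ 2) - (∫ x, (f (x + t) - f x) ^ 2) / 2 := by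
          rw [integral_div, integral_sub hsum hdiff, integral_add hf2 hshift,
            integral_add_right_eq_self (fun x => f x ^ 2) t]
          ring
  calc (∫ x, f x ^ 2) - t ^ 2 / 2 * ∫ x, f' x ^ 2
      ≤ ∫ x, f x * f (x + t) := by
        linarith [integral_sq_comp_add_sub_le hderiv hf' hf'2 t]
    _ ≤ ∫ x, |f x| * |f (x + t)| :=
        integral_mono hprod (by simpa only [abs_mul] using hprod.abs)
          fun x => (abs_mul (f x) (f (x + t))).symm ▸ le_abs_self _

end Translation

namespace Polynomial

noncomputable def gaussMul (p : ℝ[X]) (x : ℝ) : ℝ := exp (-x ^ 2 / 2) * p.eval x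

theorem continuous_gaussMul (p : ℝ[X]) : Continuous (gaussMul p) := by
  unfold gaussMul; fun_prop

theorem hasDerivAt_gaussMul (p : ℝ[X]) (x : ℝ) :
    HasDerivAt (gaussMul p) (gaussMul (derivative p - X * p) x) x := by
  have hsq : HasDerivAt (fun x : ℝ => -x ^ 2 / 2) (-x) x := by
    have h := (hasDerivAt_pow 2 x).const_mul (-1 / 2 : ℝ)
    rw [show (fun y : ℝ => -1 / 2 * y ^ 2) = fun y => -y ^ 2 / 2 by funext y; ring] at h
    exact h.congr_deriv (by push_cast; ring)
  refine (hsq.exp.mul (p.hasDerivAt x)).congr_deriv ?_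
  simp only [gaussMul, eval_sub, eval_mul, eval_X]
  ring

theorem gaussMul_sq (p : ℝ[X]) (x : ℝ) :
    gaussMul p x ^ 2 = exp (-x ^ 2) * (p ^ 2).eval x := by
  rw [gaussMul, mul_pow, sq (exp _), ← exp_add, eval_pow]
  ring_nf

theorem integrable_gaussMul_sq (p : ℝ[X]) : Integrable fun x => gaussMul p x ^ 2 := by
  simpa only [gaussMul_sq, neg_mul, one_mul] using
    integrable_exp_neg_mul_sq_mul_eval one_pos (p ^ 2)

theorem integral_gaussMul_sq (p : ℝ[X]) : ∫ x, gaussMul p x ^ 2 = gaussIntegral (p ^ 2) := by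
  simp only [gaussMul_sq, gaussIntegral_apply]

theorem one_sub_mul_integral_gaussMul_sq_le {p : ℝ[X]} {m : ℕ} (hp : p.natDegree ≤ m) (t : ℝ) :
    (1 - (m + 1 / 2) * t ^ 2) * ∫ x, gaussMul p x ^ 2 ≤
      ∫ x, |gaussMul p x| * |gaussMul p (x + t)| := by
  have h := integral_sq_sub_le_integral_abs_mul_comp_add (hasDerivAt_gaussMul p)
    (integrable_gaussMul_sq p) (continuous_gaussMul _) (integrable_gaussMul_sq _) t
  simp only [integral_gaussMul_sq] at h ⊢
  nlinarith [sq_nonneg t, gaussIntegral_sq_nonneg p, gaussIntegral_sq_derivative_sub_X_mul_le hp]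

end Polynomial

theorem setIntegral_abs_Ioo_union_neg {a b : ℝ} (ha : 0 ≤ a) :
    ∫ u in Ioo a b ∪ Ioo (-b) (-a), |u| = 2 * ∫ u in Ioo a b, u := by
  have hdisj : Disjoint (Ioo a b) (Ioo (-b) (-a)) :=
    disjoint_left.2 fun u h1 h2 => by linarith [h1.1, h2.2]
  have hint (s t : ℝ) : IntegrableOn (fun u : ℝ => |u|) (Ioo s t) :=
    continuous_abs.integrableOn_Icc.mono_set Ioo_subset_Icc_self
  have hneg : Neg.neg ⁻¹' Ioo a b = Ioo (-b) (-a) := by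
    ext u
    simp only [mem_preimage, mem_Ioo]
    constructor <;> intro h <;> constructor <;> linarith [h.1, h.2]
  have hreflect : ∫ u in Ioo (-b) (-a), |u| = ∫ u in Ioo a b, |u| := by
    simpa only [hneg, abs_neg] using
      (Measure.measurePreserving_neg volume).setIntegral_preimage_emb measurableEmbedding_neg
        (fun u : ℝ => |u|) (Ioo a b)
  have hpos : ∫ u in Ioo a b, |u| = ∫ u in Ioo a b, u :=
    setIntegral_congr_fun measurableSet_Ioo fun u hu => abs_of_pos (ha.trans_lt hu.1)
  rw [setIntegral_union hdisj measurableSet_Ioo (hint a b) (hint _ _), hreflect, hpos, two_mul]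

theorem setIntegral_sub_mem_eq {g : ℝ → ℝ} (s : Set ℝ) (x : ℝ) :
    ∫ y in {y | y - x ∈ s}, g y = ∫ u in s, g (x + u) := by
  have h := (measurePreserving_add_left volume x).setIntegral_preimage_emb
    (measurableEmbedding_addLeft x) g {y | y - x ∈ s}
  simpa only [preimage_ofPred_eq, add_sub_cancel_left, ofPred_mem_eq] using h.symm

section Autocorrelation

variable {f : ℝ → ℝ} {s : Set ℝ} {c : ℝ}

theorem integrable_abs_mul_abs_mul_comp_add (hf : Continuous f)
    (hf2 : Integrable fun x => f x ^ 2) (hs : MeasurableSet s) (hsc : ∀ u ∈ s, |u| ≤ c) :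
    Integrable (fun z : ℝ × ℝ => |z.2| * (|f z.1| * |f (z.1 + z.2)|))
      (volume.prod (volume.restrict s)) := by
  have : IsFiniteMeasure (volume.restrict s) := isFiniteMeasure_restrict.2
    ((measure_mono fun u hu => abs_le.1 (hsc u hu)).trans_lt measure_Icc_lt_top).ne
  refine integrable_prod_of_integral_norm_le (by fun_prop) (C := c * ∫ x, f x ^ 2)
    (ae_of_all _ fun u => ?_) ?_
  · simpa only [abs_mul] using ((integrable_mul_comp_add hf hf2 u).abs).const_mul |u|
  · filter_upwards [ae_restrict_mem hs] with u hu
    simp only [norm_mul, Real.norm_eq_abs, abs_abs, integral_const_mul]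
    exact mul_le_mul (hsc u hu) (integral_abs_mul_comp_add_le hf2 u)
      (integral_nonneg fun _ => by positivity) ((abs_nonneg u).trans (hsc u hu))

theorem integral_setIntegral_abs_sub_mul_eq (hf : Continuous f)
    (hf2 : Integrable fun x => f x ^ 2) (hs : MeasurableSet s) (hsc : ∀ u ∈ s, |u| ≤ c) :
    ∫ x, ∫ y in {y | y - x ∈ s}, |x - y| * |f x| * |f y| =
      ∫ u in s, |u| * ∫ x, |f x| * |f (x + u)| := by
  have hK := integrable_abs_mul_abs_mul_comp_add hf hf2 hs hsc
  calc ∫ x, ∫ y in {y | y - x ∈ s}, |x - y| * |f x| * |f y|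
      = ∫ x, ∫ u in s, |u| * (|f x| * |f (x + u)|) := by
        congr 1 with x
        rw [setIntegral_sub_mem_eq]
        congr 1 with u
        rw [sub_add_cancel_left, abs_neg, mul_assoc]
    _ = ∫ u in s, ∫ x, |u| * (|f x| * |f (x + u)|) := integral_integral_swap hK
    _ = ∫ u in s, |u| * ∫ x, |f x| * |f (x + u)| := by simp only [integral_const_mul]

theorem integral_setIntegral_abs_sub_mul_le (hf : Continuous f)
    (hf2 : Integrable fun x => f x ^ 2) (hs : MeasurableSet s) (hsc : ∀ u ∈ s, |u| ≤ c) :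
    ∫ x, ∫ y in {y | y - x ∈ s}, |x - y| * |f x| * |f y| ≤
      (∫ u in s, |u|) * ∫ x, f x ^ 2 := by
  rw [integral_setIntegral_abs_sub_mul_eq hf hf2 hs hsc, ← integral_mul_const]
  exact integral_mono_of_nonneg
    (ae_of_all _ fun u => mul_nonneg (abs_nonneg u) (integral_nonneg fun x => by positivity))
    ((continuous_abs.integrableOn_Icc.mono_set fun u hu => abs_le.1 (hsc u hu)).mul_const _)
    (ae_of_all _ fun u => mul_le_mul_of_nonneg_left (integral_abs_mul_comp_add_le hf2 u)
      (abs_nonneg u))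

theorem le_integral_setIntegral_abs_sub_mul (hf : Continuous f)
    (hf2 : Integrable fun x => f x ^ 2) (hs : MeasurableSet s) (hsc : ∀ u ∈ s, |u| ≤ c) {κ : ℝ}
    (hκ : ∀ u ∈ s, κ * ∫ x, f x ^ 2 ≤ ∫ x, |f x| * |f (x + u)|) :
    κ * (∫ u in s, |u|) * ∫ x, f x ^ 2 ≤
      ∫ x, ∫ y in {y | y - x ∈ s}, |x - y| * |f x| * |f y| := by
  have hint : IntegrableOn (fun u => |u| * ∫ x, |f x| * |f (x + u)|) s :=
    (integrable_abs_mul_abs_mul_comp_add hf hf2 hs hsc).integral_prod_right.congr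
      (ae_of_all _ fun u => integral_const_mul |u| _)
  rw [integral_setIntegral_abs_sub_mul_eq hf hf2 hs hsc, mul_right_comm, ← integral_const_mul]
  exact setIntegral_mono_on
    ((continuous_abs.integrableOn_Icc.mono_set fun u hu => abs_le.1 (hsc u hu)).const_mul _)
    hint hs fun u hu => by
      rw [mul_comm |u|]
      exact mul_le_mul_of_nonneg_right (hκ u hu) (abs_nonneg u)

end Autocorrelation

theorem stmt12_general (m n : ℕ) (hmn : m < n) (lam : Fin m → ℝ)
    (c : ℝ) (a b : ℝ) (ha : 0 ≤ a) (hb : b ≤ c)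
    (F : ℝ → ℝ) (hF : F = fun x => Real.exp (-x ^ 2 / 2) * ∏ j, (x - lam j))
    (A₁ : Set ℝ) (hA₁ : A₁ = Set.Ioo a b ∪ Set.Ioo (-b) (-a)) :
    (1 - n * c ^ 2) * (2 * ∫ u in Set.Ioo a b, u) * (∫ x : ℝ, (F x) ^ 2) ≤
      (∫ x₁ : ℝ, ∫ x₂ in {y : ℝ | y - x₁ ∈ A₁}, |x₁ - x₂| * |F x₁| * |F x₂|) ∧
    (∫ x₁ : ℝ, ∫ x₂ in {y : ℝ | y - x₁ ∈ A₁}, |x₁ - x₂| * |F x₁| * |F x₂|) ≤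
      (2 * ∫ u in Set.Ioo a b, u) * ∫ x : ℝ, (F x) ^ 2 := by
  set P : ℝ[X] := ∏ j, (X - C (lam j))
  have hFP : F = gaussMul P := by
    funext x
    simp [hF, gaussMul, P, eval_prod]
  have hdeg : P.natDegree ≤ m := (natDegree_prod_le _ _).trans (by simp)
  have hs : MeasurableSet A₁ := hA₁ ▸ measurableSet_Ioo.union measurableSet_Ioo
  have hsc : ∀ u ∈ A₁, |u| ≤ c := by
    intro u hu
    rw [hA₁] at hu
    rcases hu with ⟨h1, h2⟩ | ⟨h1, h2⟩ <;> rw [abs_le] <;> constructor <;> linarith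
  have hκ : ∀ u ∈ A₁, (1 - n * c ^ 2) * ∫ x, gaussMul P x ^ 2 ≤
      ∫ x, |gaussMul P x| * |gaussMul P (x + u)| := by
    intro u hu
    have hmn' : (m : ℝ) + 1 ≤ n := by exact_mod_cast hmn
    have hu2 : u ^ 2 ≤ c ^ 2 := by
      simpa only [sq_abs] using pow_le_pow_left₀ (abs_nonneg u) (hsc u hu) 2
    refine le_trans (mul_le_mul_of_nonneg_right ?_ (integral_nonneg fun _ => sq_nonneg _))
      (one_sub_mul_integral_gaussMul_sq_le hdeg u)
    nlinarith [sq_nonneg u]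
  rw [← setIntegral_abs_Ioo_union_neg ha, ← hA₁, hFP]
  exact ⟨le_integral_setIntegral_abs_sub_mul (continuous_gaussMul P) (integrable_gaussMul_sq P)
      hs hsc hκ,
    integral_setIntegral_abs_sub_mul_le (continuous_gaussMul P) (integrable_gaussMul_sq P) hs hsc⟩

/-- for `F(x) = e^{-x²/2} ∏_{j=1}^m (x - λ_j)` with `m < n`, `2nc² ∈ (0,1)`,
an interval `A = (a,b) ⊂ (0,c)`, `A₁ = A ∪ (-A)` and `φ(A) = ∫_A u du`:
`(1-nc²)·2φ(A) ∫|F|² ≤ ∫ dx₁ ∫_{x₁+A₁} dx₂ |x₁-x₂||F(x₁)||F(x₂)| ≤ 2φ(A) ∫|F|²`. -/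
theorem stmt12 (m n : ℕ) (hm : 0 < m) (hmn : m < n) (lam : Fin m → ℝ)
    (c : ℝ) (hc : 0 < c) (hnc : 2 * n * c ^ 2 < 1)
    (a b : ℝ) (ha : 0 ≤ a) (hb : b ≤ c)
    (F : ℝ → ℝ) (hF : F = fun x => Real.exp (-x ^ 2 / 2) * ∏ j, (x - lam j))
    (A₁ : Set ℝ) (hA₁ : A₁ = Set.Ioo a b ∪ Set.Ioo (-b) (-a)) :
    (1 - n * c ^ 2) * (2 * ∫ u in Set.Ioo a b, u) * (∫ x : ℝ, (F x) ^ 2) ≤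
      (∫ x₁ : ℝ, ∫ x₂ in {y : ℝ | y - x₁ ∈ A₁}, |x₁ - x₂| * |F x₁| * |F x₂|) ∧
    (∫ x₁ : ℝ, ∫ x₂ in {y : ℝ | y - x₁ ∈ A₁}, |x₁ - x₂| * |F x₁| * |F x₂|) ≤
      (2 * ∫ u in Set.Ioo a b, u) * ∫ x : ℝ, (F x) ^ 2 :=
  stmt12_general m n hmn lam c a b ha hb F hF A₁ hA₁
end
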